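/- For all integers p ≥ 2, n ≥ 0, d ≥ 1: O(p, n, 0, d) = Σ_{k=0}^{d−1} O(p−1, n, k, d). -/
import Mathlib


/-- The Macaulay bound `a^⟨t⟩`: writing the (unique, greedy) binomial expansion
`a = C(k(t),t) + C(k(t-1),t-1) + ⋯ + C(k(j),j)` with `k(t) > ⋯ > k(j) ≥ j ≥ 1`,
`macaulay t a = C(k(t)+1,t+1) + C(k(t-1)+1,t) + ⋯ + C(k(j)+1,j+1)`.
(The value at `t = 0` is irrelevant for the definitions below.) -/
def macaulay : ℕ → ℕ → ℕ
  | 0, a => a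
  | t+1, a =>
    if a = 0 then 0
    else
      Nat.choose (Nat.findGreatest (fun m => Nat.choose m (t+1) ≤ a) (a + t + 1) + 1) (t+2)
        + macaulay t (a - Nat.choose
            (Nat.findGreatest (fun m => Nat.choose m (t+1) ≤ a) (a + t + 1)) (t+1))

/-- A finite O-sequence `(a_0, a_1, …, a_s)`, encoded as a nonempty list of
positive integers with `a_0 = 1` and `a_{t+1} ≤ a_t^⟨t⟩` for all `1 ≤ t ≤ s-1`. -/
def IsOSeq (l : List ℕ) : Prop :=
  l ≠ [] ∧ (∀ x ∈ l, 0 < x) ∧ l.getD 0 0 = 1 ∧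
    ∀ t : ℕ, 1 ≤ t → t + 1 < l.length → l.getD (t+1) 0 ≤ macaulay t (l.getD t 0)

/-- `numOSeq d` = the number `O_d` of finite O-sequences of multiplicity `d`. -/
noncomputable def numOSeq (d : ℕ) : ℕ := {l : List ℕ | IsOSeq l ∧ l.sum = d}.ncard

/-- `numASeq d` = the number `A_d` of finite O-sequences of multiplicity `d`
whose last entry is strictly greater than `1`. -/
noncomputable def numASeq (d : ℕ) : ℕ :=
  {l : List ℕ | IsOSeq l ∧ l.sum = d ∧ 1 < l.getLastD 0}.ncard

/-- `numOCond p n k d` = the number `O(p,n,k,d)` of finite O-sequences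
`(a_0,…,a_s)` of multiplicity `d` with `s ≤ n`, `a_i = C(p-1+i, i)` for all
`0 ≤ i ≤ k` (in particular `s ≥ k`), and `a_i < C(p-1+i, i)` for `k < i ≤ s`. -/
noncomputable def numOCond (p n k d : ℕ) : ℕ :=
  {l : List ℕ | IsOSeq l ∧ l.sum = d ∧ l.length - 1 ≤ n ∧ k ≤ l.length - 1 ∧
    (∀ i ≤ k, l.getD i 0 = Nat.choose (p - 1 + i) i) ∧
    (∀ i : ℕ, k < i → i < l.length → l.getD i 0 < Nat.choose (p - 1 + i) i)}.ncard

lemma macaulay_zero : ∀ t, macaulay t 0 = 0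
  | 0 => rfl
  | t+1 => by simp [macaulay]

lemma pascal (m t : ℕ) :
    Nat.choose (m+1) (t+1) = Nat.choose m t + Nat.choose m (t+1) :=
  Nat.choose_succ_succ m t

lemma sub_le_choose_succ : ∀ (m t : ℕ), m - t ≤ Nat.choose m (t+1) := by
  intro m
  induction m with
  | zero => simp
  | succ m ih =>
    intro t
    rcases Nat.lt_or_ge m t with h | h
    · have h0 : m + 1 - t = 0 := by omega
      rw [h0]; exact Nat.zero_le _
    · have h1 : 1 ≤ Nat.choose m t := Nat.choose_pos h
      have h2 := ih t
      have h3 := pascal m t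
      omega

lemma choose_lt_choose_succ_self {m t : ℕ} (h : t ≤ m) :
    Nat.choose m (t+1) < Nat.choose (m+1) (t+1) := by
  have h1 : 1 ≤ Nat.choose m t := Nat.choose_pos h
  have := pascal m t
  omega

lemma macaulay_lt_choose : ∀ (t a m : ℕ), a < Nat.choose m t →
    macaulay t a < Nat.choose (m+1) (t+1) := by
  intro t
  induction t with
  | zero =>
    intro a m h
    simp only [Nat.choose_zero_right] at h
    interval_cases a
    simp [macaulay, Nat.choose_one_right]
  | succ t ih =>
    intro a m h
    have hm : t + 1 ≤ m := by
      by_contra hc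
      rw [Nat.choose_eq_zero_of_lt (by omega)] at h; omega
    have hbridge : Nat.choose (m+1) (t+1+1) = Nat.choose (m+1) (t+2) := rfl
    rcases Nat.eq_zero_or_pos a with rfl | ha
    · rw [macaulay_zero]
      have := Nat.choose_pos (show t+2 ≤ m+1 by omega)
      omega
    have hmac : macaulay (t+1) a =
        Nat.choose (Nat.findGreatest (fun m' => Nat.choose m' (t+1) ≤ a) (a + t + 1) + 1) (t+2)
          + macaulay t (a - Nat.choose
              (Nat.findGreatest (fun m' => Nat.choose m' (t+1) ≤ a) (a + t + 1)) (t+1)) := by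
      rw [macaulay, if_neg (by omega)]
    set g := Nat.findGreatest (fun m' => Nat.choose m' (t+1) ≤ a) (a + t + 1) with hgdef
    have hP1 : Nat.choose (t+1) (t+1) ≤ a := by rw [Nat.choose_self]; omega
    have hg1 : t + 1 ≤ g :=
      Nat.le_findGreatest (P := fun m' => Nat.choose m' (t+1) ≤ a) (m := t+1)
        (n := a + t + 1) (by omega) hP1
    have hgP : Nat.choose g (t+1) ≤ a :=
      Nat.findGreatest_spec (P := fun m' => Nat.choose m' (t+1) ≤ a) (m := t+1)
        (n := a + t + 1) (by omega) hP1
    have hgb : g ≤ a + t := by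
      have := sub_le_choose_succ g t
      omega
    have hnot : ¬ (Nat.choose (g+1) (t+1) ≤ a) :=
      Nat.findGreatest_is_greatest (P := fun m' => Nat.choose m' (t+1) ≤ a)
        (n := a + t + 1) (k := g+1) (by omega) (by omega)
    have hglt : g < m := by
      by_contra hc
      have := Nat.choose_le_choose (t+1) (show m ≤ g by omega)
      omega
    have hpas := pascal g t
    have hr : a - Nat.choose g (t+1) < Nat.choose g t := by omega
    have hih := ih (a - Nat.choose g (t+1)) g hr
    have hpas2 := pascal (g+1) (t+1)
    have h3 : Nat.choose (g+1+1) (t+1+1) ≤ Nat.choose (m+1) (t+1+1) :=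
      Nat.choose_le_choose (t+1+1) (by omega)
    have hbridge2 : Nat.choose (g+1+1) (t+1+1) = Nat.choose (g+2) (t+2) := rfl
    have hbridge3 : Nat.choose (g+1) (t+1+1) = Nat.choose (g+1) (t+2) := rfl
    rw [hmac]
    omega

lemma macaulay_choose {t m : ℕ} (ht : 1 ≤ t) (hm : t ≤ m) :
    macaulay t (Nat.choose m t) = Nat.choose (m+1) (t+1) := by
  obtain ⟨t, rfl⟩ : ∃ t', t = t' + 1 := ⟨t - 1, by omega⟩
  have ha1 : 1 ≤ Nat.choose m (t+1) := Nat.choose_pos hm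
  have hmb : m ≤ Nat.choose m (t+1) + t + 1 := by
    have := sub_le_choose_succ m t; omega
  have hgm : Nat.findGreatest (fun m' => Nat.choose m' (t+1) ≤ Nat.choose m (t+1))
      (Nat.choose m (t+1) + t + 1) = m := by
    have h1 : m ≤ Nat.findGreatest (fun m' => Nat.choose m' (t+1) ≤ Nat.choose m (t+1))
        (Nat.choose m (t+1) + t + 1) :=
      Nat.le_findGreatest (P := fun m' => Nat.choose m' (t+1) ≤ Nat.choose m (t+1)) hmb (le_refl _)
    have h2 : Nat.findGreatest (fun m' => Nat.choose m' (t+1) ≤ Nat.choose m (t+1))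
        (Nat.choose m (t+1) + t + 1) ≤ m := by
      by_contra hc
      push_neg at hc
      have hgP : Nat.choose (Nat.findGreatest (fun m' => Nat.choose m' (t+1) ≤ Nat.choose m (t+1))
          (Nat.choose m (t+1) + t + 1)) (t+1) ≤ Nat.choose m (t+1) :=
        Nat.findGreatest_spec (P := fun m' => Nat.choose m' (t+1) ≤ Nat.choose m (t+1)) (m := m) hmb (le_refl _)
      have h4 : Nat.choose (m+1) (t+1) ≤ Nat.choose (Nat.findGreatest
          (fun m' => Nat.choose m' (t+1) ≤ Nat.choose m (t+1))
          (Nat.choose m (t+1) + t + 1)) (t+1) :=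
        Nat.choose_le_choose _ (by omega)
      have h5 := choose_lt_choose_succ_self (t := t) (m := m) (by omega)
      omega
    omega
  rw [macaulay, if_neg (by omega), hgm, Nat.sub_self, macaulay_zero]
  rfl


lemma finite_posSum (d : ℕ) : {l : List ℕ | (∀ x ∈ l, 0 < x) ∧ l.sum = d}.Finite := by
  have h1 : {l : List (Fin (d+1)) | l.length ≤ d}.Finite := List.finite_length_le _ d
  refine (h1.image (List.map Fin.val)).subset ?_
  rintro l ⟨hpos, hsum⟩
  have hlen : l.length ≤ d := by
    rw [← hsum]; exact List.length_le_sum_of_one_le l hpos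
  have hbd : ∀ x ∈ l, x < d + 1 := by
    intro x hx
    have := List.single_le_sum (fun y _ => Nat.zero_le y) x hx
    omega
  refine ⟨l.attach.map (fun x => (⟨x.1, hbd x.1 x.2⟩ : Fin (d+1))), ?_, ?_⟩
  · simpa using hlen
  · simp [List.map_map, Function.comp_def]

lemma ncard_biUnion_of_disjoint {α : Type*} (s : Finset ℕ) (f : ℕ → Set α)
    (hf : ∀ i ∈ s, (f i).Finite)
    (hd : ∀ i ∈ s, ∀ j ∈ s, i ≠ j → Disjoint (f i) (f j)) :
    (⋃ i ∈ s, f i).ncard = ∑ i ∈ s, (f i).ncard := by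
  classical
  induction s using Finset.induction with
  | empty => simp
  | @insert a s ha ih =>
    rw [Finset.set_biUnion_insert, Finset.sum_insert ha]
    rw [Set.ncard_union_eq ?_ (hf a (Finset.mem_insert_self a s)) ?_]
    · rw [ih (fun i hi => hf i (Finset.mem_insert_of_mem hi))
        (fun i hi j hj hij => hd i (Finset.mem_insert_of_mem hi) j
          (Finset.mem_insert_of_mem hj) hij)]
    · rw [Set.disjoint_iUnion_right]
      intro i
      rw [Set.disjoint_iUnion_right]
      intro hi
      exact hd a (Finset.mem_insert_self a s) i (Finset.mem_insert_of_mem hi) (by rintro rfl; exact ha hi)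
    · exact Set.Finite.biUnion s.finite_toSet (fun i hi => hf i (Finset.mem_insert_of_mem (by simpa using hi)))

lemma forward_dir (p n d : ℕ) (hp : 2 ≤ p) (l : List ℕ)
    (hl : IsOSeq l) (hsum : l.sum = d) (hlen : l.length - 1 ≤ n)
    (hS : ∀ i : ℕ, 0 < i → i < l.length → l.getD i 0 < Nat.choose (p - 1 + i) i) :
    ∃ k < d, IsOSeq l ∧ l.sum = d ∧ l.length - 1 ≤ n ∧ k ≤ l.length - 1 ∧
      (∀ i ≤ k, l.getD i 0 = Nat.choose (p - 2 + i) i) ∧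
      (∀ i : ℕ, k < i → i < l.length → l.getD i 0 < Nat.choose (p - 2 + i) i) := by
  classical
  obtain ⟨hne, hpos, h0, hmac⟩ := hl
  have hlpos : 1 ≤ l.length := List.length_pos_iff.mpr hne
  have hdle : l.length ≤ d := by
    rw [← hsum]; exact List.length_le_sum_of_one_le l hpos
  by_cases hall : ∀ i < l.length, l.getD i 0 = Nat.choose (p - 2 + i) i
  · refine ⟨l.length - 1, by omega, ⟨hne, hpos, h0, hmac⟩, hsum, hlen, le_refl _, ?_, ?_⟩
    · intro i hi; exact hall i (by omega)
    · intro i hi1 hi2; omega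
  · push_neg at hall
    obtain ⟨i1, hi1len, hi1ne⟩ := hall
    have hex : ∃ i, i < l.length ∧ l.getD i 0 ≠ Nat.choose (p - 2 + i) i := ⟨i1, hi1len, hi1ne⟩
    obtain ⟨i0, hi0len, hi0ne, heq⟩ :
        ∃ i0, i0 < l.length ∧ l.getD i0 0 ≠ Nat.choose (p - 2 + i0) i0 ∧
          ∀ j < i0, l.getD j 0 = Nat.choose (p - 2 + j) j := by
      refine ⟨Nat.find hex, (Nat.find_spec hex).1, (Nat.find_spec hex).2, ?_⟩
      intro j hj
      have h1 := Nat.find_min hex hj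
      push_neg at h1
      have h2 := (Nat.find_spec hex).1
      exact h1 (by omega)
    have hi0pos : 1 ≤ i0 := by
      rcases Nat.eq_zero_or_pos i0 with h | h
      · exfalso; apply hi0ne; rw [h] at hi0ne ⊢
        simp only [Nat.add_zero, Nat.choose_zero_right]
        exact h0
      · exact h
    have base : l.getD i0 0 < Nat.choose (p - 2 + i0) i0 := by
      have hle : l.getD i0 0 ≤ Nat.choose (p - 2 + i0) i0 := by
        rcases eq_or_lt_of_le hi0pos with h1 | h1
        · -- i0 = 1
          subst h1
          have hS1 := hS 1 (by omega) (by omega)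
          rw [Nat.choose_one_right] at hS1 ⊢
          omega
        · -- i0 ≥ 2
          obtain ⟨t, rfl⟩ : ∃ t, i0 = t + 1 := ⟨i0 - 1, by omega⟩
          have ht1 : 1 ≤ t := by omega
          have hmt := hmac t ht1 (by omega)
          rw [heq t (by omega)] at hmt
          rw [macaulay_choose ht1 (by omega : t ≤ p - 2 + t)] at hmt
          have hb : p - 2 + t + 1 = p - 2 + (t + 1) := by omega
          rw [hb] at hmt
          exact hmt
      omega
    have main : ∀ i, i0 ≤ i → i < l.length → l.getD i 0 < Nat.choose (p - 2 + i) i := by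
      intro i hi
      induction i, hi using Nat.le_induction with
      | base => intro _; exact base
      | succ i hi ih =>
        intro hlt
        have hIH := ih (by omega)
        have h1 := hmac i (by omega) hlt
        have h2 := macaulay_lt_choose i (l.getD i 0) (p - 2 + i) hIH
        have hb : p - 2 + i + 1 = p - 2 + (i + 1) := by omega
        rw [hb] at h2
        omega
    refine ⟨i0 - 1, by omega, ⟨hne, hpos, h0, hmac⟩, hsum, hlen, by omega, ?_, ?_⟩
    · intro i hi
      rcases Nat.lt_or_ge i i0 with h | h
      · exact heq i h
      · exfalso; omega
    · intro i hki hilen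
      exact main i (by omega) hilen

lemma backward_dir (p n d k : ℕ) (hp : 2 ≤ p) (l : List ℕ)
    (hl : IsOSeq l) (hk : k ≤ l.length - 1)
    (heq : ∀ i ≤ k, l.getD i 0 = Nat.choose (p - 2 + i) i)
    (hlt : ∀ i : ℕ, k < i → i < l.length → l.getD i 0 < Nat.choose (p - 2 + i) i) :
    ∀ i : ℕ, 0 < i → i < l.length → l.getD i 0 < Nat.choose (p - 1 + i) i := by
  intro i hi0 hilen
  have hb : Nat.choose (p - 2 + i) i < Nat.choose (p - 1 + i) i := by
    obtain ⟨j, rfl⟩ : ∃ j, i = j + 1 := ⟨i - 1, by omega⟩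
    have h1 : p - 1 + (j + 1) = (p - 2 + (j + 1)) + 1 := by omega
    rw [h1, pascal]
    have h2 : 0 < Nat.choose (p - 2 + (j + 1)) j := Nat.choose_pos (by omega)
    omega
  rcases le_or_gt i k with h | h
  · rw [heq i h]; exact hb
  · exact lt_of_lt_of_le (hlt i h hilen) (le_of_lt hb)

/-- For all `p ≥ 2`, `n ≥ 0`, `d ≥ 1`:
`O(p,n,0,d) = Σ_{k=0}^{d-1} O(p-1,n,k,d)`. -/
theorem numOCond_zero_k (p n d : ℕ) (hp : 2 ≤ p) (hd : 1 ≤ d) :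
    numOCond p n 0 d = ∑ k ∈ Finset.range d, numOCond (p - 1) n k d := by
  classical
  have hpp : p - 1 - 1 = p - 2 := by omega
  set T : ℕ → Set (List ℕ) := fun k =>
    {l : List ℕ | IsOSeq l ∧ l.sum = d ∧ l.length - 1 ≤ n ∧ k ≤ l.length - 1 ∧
      (∀ i ≤ k, l.getD i 0 = Nat.choose (p - 1 - 1 + i) i) ∧
      (∀ i : ℕ, k < i → i < l.length → l.getD i 0 < Nat.choose (p - 1 - 1 + i) i)} with hT
  have hkey : {l : List ℕ | IsOSeq l ∧ l.sum = d ∧ l.length - 1 ≤ n ∧ 0 ≤ l.length - 1 ∧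
      (∀ i ≤ 0, l.getD i 0 = Nat.choose (p - 1 + i) i) ∧
      (∀ i : ℕ, 0 < i → i < l.length → l.getD i 0 < Nat.choose (p - 1 + i) i)}
      = ⋃ k ∈ Finset.range d, T k := by
    rw [hT]
    simp only [hpp]
    ext l
    simp only [Set.mem_setOf_eq, Set.mem_iUnion, Finset.mem_range, exists_prop]
    constructor
    · rintro ⟨h1, h2, h3, -, -, h6⟩
      exact forward_dir p n d hp l h1 h2 h3 h6
    · rintro ⟨k, hk, h1, h2, h3, h4, h5, h6⟩
      refine ⟨h1, h2, h3, Nat.zero_le _, ?_,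
        backward_dir p n d k hp l h1 h4 h5 h6⟩
      intro i hi
      obtain rfl : i = 0 := by omega
      simpa [Nat.choose_zero_right] using h1.2.2.1
  have hfin : ∀ k ∈ Finset.range d, (T k).Finite := by
    intro k _
    exact (finite_posSum d).subset (fun l hl => ⟨hl.1.2.1, hl.2.1⟩)
  have hdisj0 : ∀ k j : ℕ, k < j → Disjoint (T k) (T j) := by
    intro k j hkj
    rw [Set.disjoint_left]
    rintro l ⟨h1, h2, h3, h4, h5, h6⟩ ⟨g1, g2, g3, g4, g5, g6⟩
    have hlpos : 1 ≤ l.length := List.length_pos_iff.mpr h1.1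
    have hkl : k + 1 < l.length := by omega
    have ha := g5 (k+1) (by omega)
    have hb := h6 (k+1) (by omega) hkl
    omega
  have hdisj : ∀ k ∈ Finset.range d, ∀ j ∈ Finset.range d, k ≠ j → Disjoint (T k) (T j) := by
    intro k _ j _ hkj
    rcases Nat.lt_or_ge k j with h | h
    · exact hdisj0 k j h
    · exact (hdisj0 j k (by omega)).symm
  unfold numOCond
  rw [hkey]
  exact ncard_biUnion_of_disjoint (Finset.range d) T hfin hdisj
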